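/- arXiv:2206.08993 — 2 statements merged into one kernel-verified Lean document; each statement's English description precedes it below -/
import Mathlib

section
/- If γ is obtained from α by a single left swap (exchanging parts α_i < α_j with i < j, yielding the smaller composition γ), then γ ≤ α in the Bruhat order on weak compositions. -/
/-- The `j`-th largest element (0-indexed) of a finite set of `Fin n`,
viewed as an element of `[n] = {1,...,n}` via `i ↦ i + 1`; `0` as default. -/
def jthLargestF (n : ℕ) (S : Finset (Fin n)) (j : ℕ) : ℕ :=
  (((Finset.sort S (· ≤ ·)).reverse).map (fun i => (i : ℕ) + 1)).getD j 0

/-- The `j`-th smallest element (0-indexed), similarly. -/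
def jthSmallestF (n : ℕ) (S : Finset (Fin n)) (j : ℕ) : ℕ :=
  ((Finset.sort S (· ≤ ·)).map (fun i => (i : ℕ) + 1)).getD j 0

/-- Order on subsets of `[n]`: equal cardinality and `j`-th largest elements compare. -/
def setLEF (n : ℕ) (S T : Finset (Fin n)) : Prop :=
  S.card = T.card ∧ ∀ j < S.card, jthLargestF n S j ≤ jthLargestF n T j

/-- The `c`-th column of the key tableau of the weak composition `α`: `{i : α i ≥ c}`. -/
def col (n : ℕ) (α : Fin n → ℕ) (c : ℕ) : Finset (Fin n) :=
  Finset.univ.filter (fun i => c ≤ α i)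

/-- The support of a weak composition. -/
def suppC (n : ℕ) (α : Fin n → ℕ) : Finset (Fin n) :=
  Finset.univ.filter (fun i => 0 < α i)

/-- Bruhat order on weak compositions: key tableaux have the same shape and
compare entry-wise, expressed column by column. -/
def bruhatLE (n : ℕ) (γ α : Fin n → ℕ) : Prop :=
  ∀ c : ℕ, 1 ≤ c → setLEF n (col n γ c) (col n α c)

/-- `μ` is the Bruhat-minimum of `{γ : γ ≥ α, supp γ ⊆ S}`. -/
def isBruhatMin (n : ℕ) (α : Fin n → ℕ) (S : Finset (Fin n)) (μ : Fin n → ℕ) : Prop :=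
  bruhatLE n α μ ∧ suppC n μ ⊆ S ∧
    ∀ γ : Fin n → ℕ, bruhatLE n α γ → suppC n γ ⊆ S → bruhatLE n μ γ

/-- `μ` is the Bruhat-maximum of `{γ : γ ≤ α, supp γ ⊆ S}`. -/
def isBruhatMax (n : ℕ) (α : Fin n → ℕ) (S : Finset (Fin n)) (μ : Fin n → ℕ) : Prop :=
  bruhatLE n μ α ∧ suppC n μ ⊆ S ∧
    ∀ γ : Fin n → ℕ, bruhatLE n γ α → suppC n γ ⊆ S → bruhatLE n γ μ

/-- `γ` is obtained from `α` by a single left swap: exchange parts `α i < α j` with `i < j`. -/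
def leftSwapStep (n : ℕ) (γ α : Fin n → ℕ) : Prop :=
  ∃ i j : Fin n, i < j ∧ α i < α j ∧ γ = fun k => α (Equiv.swap i j k)

/-- The left swap order: reflexive-transitive closure of single left swaps. -/
def leftSwapLE (n : ℕ) (γ α : Fin n → ℕ) : Prop :=
  Relation.ReflTransGen (leftSwapStep n) γ α

/-- `B = C ◁ A`: there is a strictly increasing choice `b` of elements of `C`,
`b k` being the smallest element of `C` that is `≥` the `k`-th smallest element
of `A` and exceeds all previously chosen elements, with `B` the set of chosen elements. -/
def isLhd (n : ℕ) (C A B : Finset (Fin n)) : Prop :=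
  ∃ b : Fin A.card → Fin n, StrictMono b ∧ (∀ k, b k ∈ C) ∧
    (∀ k : Fin A.card, jthSmallestF n A k ≤ (b k : ℕ) + 1) ∧
    (∀ k : Fin A.card, ∀ c ∈ C, jthSmallestF n A k ≤ (c : ℕ) + 1 →
      (∀ j : Fin A.card, j < k → b j < c) → b k ≤ c) ∧
    B = Finset.image b Finset.univ

/-- `lhdChain [C₁, ..., C_k] B` means `B = C₁ ◁ (C₂ ◁ (⋯ ◁ C_k))`. -/
def lhdChain (n : ℕ) : List (Finset (Fin n)) → Finset (Fin n) → Prop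
  | [], B => B = ∅
  | [C], B => B = C
  | C :: D :: rest, B => ∃ B', lhdChain n (D :: rest) B' ∧ isLhd n C B' B

/-- `T ∈ RSSYT(α)`: a reverse semistandard Young tableau of shape `α⁺`, encoded by its
columns (strictly decreasing sets, rows weakly decreasing), whose left key is
entry-wise at most `key α`. -/
def memRSSYT (n : ℕ) (α : Fin n → ℕ) (T : ℕ → Finset (Fin n)) : Prop :=
  (∀ c, 1 ≤ c → (T c).card = (col n α c).card) ∧
  (∀ c, 1 ≤ c → ∀ k < (T (c+1)).card, jthLargestF n (T (c+1)) k ≤ jthLargestF n (T c) k) ∧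
  (∀ c, 1 ≤ c → ∃ B, lhdChain n ((List.range c).map (fun i => T (i+1))) B ∧
    setLEF n B (col n α c))

/-- `(L, E) ∈ RSVT(α)`: a reverse set-valued tableau of shape `α⁺` encoded as a diagram
pair by columns: `L c` the leading entries and `E c` the extra entries of column `c`,
with left key (of the leading tableau) entry-wise at most `key α`. -/
def memRSVT (n : ℕ) (α : Fin n → ℕ) (L E : ℕ → Finset (Fin n)) : Prop :=
  (∀ c, 1 ≤ c → Disjoint (L c) (E c)) ∧
  (∀ c, 1 ≤ c → (L c).card = (col n α c).card) ∧
  (∀ c, 1 ≤ c → ∀ k < (L (c+1)).card, jthLargestF n (L (c+1)) k ≤ jthLargestF n (L c) k) ∧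
  (∀ c, 1 ≤ c → ∀ e ∈ E c,
    ((L (c+1)).filter (fun l => e < l)).card < ((L c).filter (fun l => e < l)).card) ∧
  (∀ c, 1 ≤ c → ∃ B, lhdChain n ((List.range c).map (fun i => L (i+1))) B ∧
    setLEF n B (col n α c))

/-- `(L, E)` is a valid reverse set-valued tableau (of some shape), without any
left-key condition. -/
def isValidRSVT (n : ℕ) (L E : ℕ → Finset (Fin n)) : Prop :=
  (∀ c, 1 ≤ c → Disjoint (L c) (E c)) ∧
  (∀ c, 1 ≤ c → (L (c+1)).card ≤ (L c).card) ∧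
  (∃ N, ∀ c, N ≤ c → L c = ∅ ∧ E c = ∅) ∧
  (∀ c, 1 ≤ c → ∀ k < (L (c+1)).card, jthLargestF n (L (c+1)) k ≤ jthLargestF n (L c) k) ∧
  (∀ c, 1 ≤ c → ∀ e ∈ E c,
    ((L (c+1)).filter (fun l => e < l)).card < ((L c).filter (fun l => e < l)).card)

/-- `j`-th largest element of a finite set of naturals (0-indexed), default `0`. -/
def jthLargestN (S : Finset ℕ) (j : ℕ) : ℕ :=
  ((Finset.sort S (· ≤ ·)).reverse).getD j 0

/-- `j`-th smallest element of a finite set of naturals (0-indexed), default `0`. -/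
def jthSmallestN (S : Finset ℕ) (j : ℕ) : ℕ :=
  (Finset.sort S (· ≤ ·)).getD j 0

/-
Column `c` of `key γ` is column `c` of `key α` with `i` and `j` exchanged. As `α i < α j`, a
column containing `i` also contains `j`, so the exchange either fixes the column or replaces `j`
by the smaller `i`. Comparing the sorted columns entry-wise amounts to comparing, for every
threshold `a`, how many entries are `≥ a`, and replacing `j` by `i` can only lower these counts.
-/

lemma card_sub_le_card_filter_iff_le_orderEmbOfFin {ι : Type*} [LinearOrder ι] (S : Finset ι)
    (a : ι) (m : Fin S.card) :
    S.card - m ≤ (S.filter (a ≤ ·)).card ↔ a ≤ S.orderEmbOfFin rfl m := by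
  set e := S.orderEmbOfFin rfl
  have hcount : (S.filter (a ≤ ·)).card = (Finset.univ.filter (a ≤ e ·)).card := by
    conv_lhs => rw [← S.image_orderEmbOfFin_univ rfl]
    rw [Finset.filter_image, Finset.card_image_of_injective _ e.injective]
  rw [hcount]
  constructor
  · intro hle
    by_contra! hlt
    have hsub : Finset.univ.filter (a ≤ e ·) ⊆ Finset.Ioi m := fun k hk =>
      Finset.mem_Ioi.2 (e.lt_iff_lt.1 (hlt.trans_le (Finset.mem_filter.1 hk).2))
    have := Finset.card_le_card hsub
    rw [Fin.card_Ioi] at this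
    omega
  · intro ham
    have hsub : Finset.Ici m ⊆ Finset.univ.filter (a ≤ e ·) := fun k hk =>
      Finset.mem_filter.2 ⟨Finset.mem_univ k, ham.trans (e.monotone (Finset.mem_Ici.1 hk))⟩
    simpa only [Fin.card_Ici] using Finset.card_le_card hsub

lemma jthLargestF_eq_orderEmbOfFin (n : ℕ) (S : Finset (Fin n)) (j : ℕ) (hj : j < S.card) :
    jthLargestF n S j = (S.orderEmbOfFin rfl ⟨S.card - 1 - j, by omega⟩ : ℕ) + 1 := by
  have hlen : (Finset.sort S (· ≤ ·)).length = S.card := Finset.length_sort _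
  -- the list in `jthLargestF` is coerced to `List ℕ` by a monadic lift, i.e. a `flatMap`
  simp only [jthLargestF, List.pure_def, List.bind_eq_flatMap, ← List.map_eq_flatMap,
    List.map_map]
  rw [List.getD_eq_getElem _ _ (by simpa [hlen] using hj)]
  simp [List.getElem_reverse, Finset.orderEmbOfFin_apply, hlen]

lemma setLEF_of_card_filter_le (n : ℕ) (S T : Finset (Fin n)) (hcard : S.card = T.card)
    (h : ∀ a, (S.filter (a ≤ ·)).card ≤ (T.filter (a ≤ ·)).card) : setLEF n S T := by
  refine ⟨hcard, fun j hj => ?_⟩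
  have hj' : j < T.card := hcard ▸ hj
  set a := S.orderEmbOfFin rfl ⟨S.card - 1 - j, by omega⟩
  have hS : j + 1 ≤ (S.filter (a ≤ ·)).card := by
    have := (card_sub_le_card_filter_iff_le_orderEmbOfFin S a ⟨S.card - 1 - j, by omega⟩).2 le_rfl
    dsimp only at this
    omega
  have hT : a ≤ T.orderEmbOfFin rfl ⟨T.card - 1 - j, by omega⟩ := by
    refine (card_sub_le_card_filter_iff_le_orderEmbOfFin T a _).1 ?_
    dsimp only
    have := h a
    omega
  rw [jthLargestF_eq_orderEmbOfFin n S j hj, jthLargestF_eq_orderEmbOfFin n T j hj']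
  exact Nat.succ_le_succ hT

lemma mem_col {n : ℕ} {α : Fin n → ℕ} {c : ℕ} {k : Fin n} : k ∈ col n α c ↔ c ≤ α k := by
  simp [col]

lemma col_comp_perm (n : ℕ) (α : Fin n → ℕ) (σ : Equiv.Perm (Fin n)) (c : ℕ) :
    col n (fun k => α (σ k)) c = (col n α c).image σ.symm := by
  ext k
  simp [mem_col, Equiv.symm_apply_eq]

lemma setLEF_image_swap (n : ℕ) (S : Finset (Fin n)) {i j : Fin n} (hij : i ≤ j)
    (hji : i ∈ S → j ∈ S) : setLEF n (S.image (Equiv.swap i j)) S := by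
  have hcard : (S.image (Equiv.swap i j)).card = S.card :=
    Finset.card_image_of_injective _ (Equiv.injective _)
  by_cases hi : i ∈ S
  · have hS : S.image (Equiv.swap i j) = S := by
      refine Finset.eq_of_subset_of_card_le (Finset.image_subset_iff.2 fun x hx => ?_) hcard.ge
      rw [Equiv.swap_apply_def]
      split_ifs
      exacts [hji hi, hi, hx]
    rw [hS]
    exact ⟨rfl, fun _ _ => le_rfl⟩
  refine setLEF_of_card_filter_le n _ _ hcard fun a => ?_
  rw [Finset.filter_image, Finset.card_image_of_injective _ (Equiv.injective _)]
  apply Finset.card_le_card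
  intro x hx
  simp only [Finset.mem_filter] at hx ⊢
  refine ⟨hx.1, hx.2.trans ?_⟩
  rcases eq_or_ne x i with rfl | hxi
  · exact absurd hx.1 hi
  rcases eq_or_ne x j with rfl | hxj
  · simpa using hij
  · simp [Equiv.swap_apply_of_ne_of_ne hxi hxj]

/-- a single left swap decreases in the Bruhat order. -/
theorem stmt8 (n : ℕ) (α γ : Fin n → ℕ) (h : leftSwapStep n γ α) :
    bruhatLE n γ α := by
  obtain ⟨i, j, hij, hα, rfl⟩ := h
  intro c _
  rw [col_comp_perm, Equiv.symm_swap]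
  exact setLEF_image_swap n _ hij.le fun hi => mem_col.2 ((mem_col.1 hi).trans hα.le)
end

section
/- Let α be a weak composition of length n, S ⊆ [n], and suppose m(α,S) exists (computed by the greedy algorithm: iterate i = 1 to n, adding α_i to a multiset when α_i > 0, and when i ∈ S and the multiset is nonempty, removing its maximum and assigning it to position i of the output σ). Then for each column c, the set of entries in column c of key(σ) equals S ◁ A_c, where A_c is the set of entries in column c of key(α). -/
/-!
The greedy sequence defining `S ◁ A` is the entrywise least increasing sequence in `S` that
dominates the increasing enumeration of `A`, and `S ◁ A' ⊆ S ◁ A` whenever `A' ⊆ A`.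
The columns `M_c` of `key μ` lie in `S` and dominate the columns `A_c` of `key α`, so
`B_c = S ◁ A_c` lies entrywise between `A_c` and `M_c`. The sets `B_c` are nested, hence they
are the columns of the key of a composition `ν ≥ α` supported in `S`; minimality of `μ` gives
`μ ≤ ν`, so `M_c = B_c`.
-/

open Finset

section SortedEnumeration

variable {n m : ℕ}

-- `jthSmallestF` and `jthLargestF` coerce the sorted list to `List ℕ` by a monadic bind before
-- mapping; `← List.map_eq_flatMap` turns that bind back into a `map`.
theorem jthSmallestF_eq_orderEmbOfFin (A : Finset (Fin n)) (h : A.card = m) (k : Fin m) :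
    jthSmallestF n A k = A.orderEmbOfFin h k + 1 := by
  have hk : k.val < (A.sort (· ≤ ·)).length := by simp [h]
  simp [jthSmallestF, ← List.map_eq_flatMap, List.getElem?_eq_getElem hk, orderEmbOfFin_apply]

theorem jthLargestF_eq_orderEmbOfFin_s13 (A : Finset (Fin n)) (h : A.card = m) (k : Fin m) :
    jthLargestF n A k = A.orderEmbOfFin h k.rev + 1 := by
  simp [jthLargestF, ← List.map_eq_flatMap, orderEmbOfFin_apply, h, Fin.val_rev, Nat.sub_sub,
    Nat.add_comm 1]

theorem setLEF_iff {S T : Finset (Fin n)} (hS : S.card = m) (hT : T.card = m) :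
    setLEF n S T ↔ ∀ k, S.orderEmbOfFin hS k ≤ T.orderEmbOfFin hT k := by
  have hrev : (∀ j < m, jthLargestF n S j ≤ jthLargestF n T j) ↔
      ∀ k : Fin m, S.orderEmbOfFin hS k.rev ≤ T.orderEmbOfFin hT k.rev := by
    rw [Fin.forall_iff]
    refine forall₂_congr fun j hj => ?_
    rw [jthLargestF_eq_orderEmbOfFin_s13 S hS ⟨j, hj⟩, jthLargestF_eq_orderEmbOfFin_s13 T hT ⟨j, hj⟩,
      add_le_add_iff_right, Fin.val_fin_le]
  rw [setLEF, hS, hT, hrev]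
  exact ⟨fun h k => by simpa using h.2 k.rev, fun h => ⟨rfl, fun k => h k.rev⟩⟩

theorem setLEF_antisymm {S T : Finset (Fin n)} (hST : setLEF n S T) (hTS : setLEF n T S) :
    S = T := by
  have hT : T.card = S.card := hST.1.symm
  have heq : S.orderEmbOfFin rfl = T.orderEmbOfFin hT := by
    ext k
    exact congrArg Fin.val <|
      le_antisymm ((setLEF_iff rfl hT).1 hST k) ((setLEF_iff hT rfl).1 hTS k)
  rw [← coe_inj, ← range_orderEmbOfFin S rfl, heq, range_orderEmbOfFin]

end SortedEnumeration

section Greedy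

variable {α : Type*} [LinearOrder α] {m m' : ℕ}

/-- `b` is the sequence defining `S ◁ A` when `a` enumerates `A` increasingly. -/
structure IsGreedy (S : Finset α) (a b : Fin m → α) : Prop where
  strictMono : StrictMono b
  mem : ∀ k, b k ∈ S
  le : ∀ k, a k ≤ b k
  le_of_mem : ∀ k, ∀ x ∈ S, a k ≤ x → (∀ j < k, b j < x) → b k ≤ x

/-- The greedy choices, `⊤` once no admissible element of `S` is left. -/
noncomputable def greedySeq (S : Finset α) (a : Fin m → α) (k : Fin m) : WithTop α :=
  -- With the default instances, deciding `∀ j < k, _` would evaluate `greedySeq S a j` outside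
  -- the scope of `j < k`, and the recursion would not be well founded.
  haveI := Classical.propDecidable
  (S.filter fun x => a k ≤ x ∧ ∀ j < k, greedySeq S a j < x).min
termination_by k

variable {S : Finset α} {a b : Fin m → α}

theorem IsGreedy.le_of_strictMono (hb : IsGreedy S a b) {c : Fin m → α} (hc : StrictMono c)
    (hcS : ∀ k, c k ∈ S) (hac : a ≤ c) : b ≤ c := by
  intro k
  induction k using WellFoundedLT.induction with
  | _ k ih => exact hb.le_of_mem k (c k) (hcS k) (hac k) fun j hj => (ih j hj).trans_lt (hc hj)

theorem greedySeq_le {k : Fin m} {x : α} (hx : x ∈ S) (hax : a k ≤ x)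
    (hlt : ∀ j < k, greedySeq S a j < x) : greedySeq S a k ≤ x := by
  rw [greedySeq.eq_1, Finset.filter_congr_decidable]
  exact Finset.min_le (Finset.mem_filter.2 ⟨hx, hax, hlt⟩)

theorem greedySeq_spec {k : Fin m} {x : α} (h : greedySeq S a k = x) :
    x ∈ S ∧ a k ≤ x ∧ ∀ j < k, greedySeq S a j < x := by
  rw [greedySeq.eq_1, Finset.filter_congr_decidable] at h
  exact Finset.mem_filter.1 (Finset.mem_of_min h)

theorem exists_isGreedy {c : Fin m → α} (hc : StrictMono c) (hcS : ∀ k, c k ∈ S)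
    (hac : a ≤ c) : ∃ b, IsGreedy S a b := by
  have hle : ∀ k, greedySeq S a k ≤ c k := by
    intro k
    induction k using WellFoundedLT.induction with
    | _ k ih => exact greedySeq_le (hcS k) (hac k) fun j hj =>
        (ih j hj).trans_lt (WithTop.coe_lt_coe.2 (hc hj))
  let b k := (greedySeq S a k).untop (ne_top_of_le_ne_top WithTop.coe_ne_top (hle k))
  have hb : ∀ k, greedySeq S a k = b k := fun k => (WithTop.coe_untop _ _).symm
  have hspec : ∀ k, b k ∈ S ∧ a k ≤ b k ∧ ∀ j < k, b j < b k := by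
    intro k
    simpa [hb] using greedySeq_spec (hb k)
  refine ⟨b, fun j k hjk => (hspec k).2.2 j hjk, fun k => (hspec k).1, fun k => (hspec k).2.1,
    fun k x hx hax hlt => ?_⟩
  simpa [hb] using greedySeq_le (S := S) (a := a) hx hax fun j hj => by simpa [hb] using hlt j hj

theorem IsGreedy.range_subset_range {a' b' : Fin m' → α} (hb : IsGreedy S a b)
    (hb' : IsGreedy S a' b') (ha : StrictMono a) (ha' : StrictMono a')
    (haa' : Set.range a' ⊆ Set.range a) : Set.range b' ⊆ Set.range b := by
  choose ι hι using fun k => haa' ⟨k, rfl⟩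
  have hιmono : StrictMono ι := fun i j hij => ha.lt_iff_lt.1 (by rw [hι, hι]; exact ha' hij)
  have hle : ∀ k, b' k ≤ b (ι k) :=
    hb'.le_of_strictMono (hb.strictMono.comp hιmono) (fun k => hb.mem _)
      fun k => hι k ▸ hb.le (ι k)
  rintro _ ⟨k, rfl⟩
  -- For the first `j` with `b' k ≤ b j`, greedy minimality of `b j` forces `b j = b' k`.
  obtain ⟨j, hj, hjmin⟩ := wellFounded_lt.has_min {j | b' k ≤ b j} ⟨ι k, hle k⟩
  have hlt : ∀ i < j, b i < b' k := fun i hi => not_le.1 fun h => hjmin i h hi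
  have hjι : j ≤ ι k := not_lt.1 fun h => (hlt _ h).not_ge (hle k)
  refine ⟨j, le_antisymm (hb.le_of_mem j _ (hb'.mem k) ?_ hlt) hj⟩
  calc a j ≤ a (ι k) := ha.monotone hjι
    _ = a' k := hι k
    _ ≤ b' k := hb'.le k

theorem card_image_univ_of_strictMono {b : Fin m → α} (hb : StrictMono b) :
    (image b univ).card = m := by
  simp [card_image_of_injective _ hb.injective]

theorem orderEmbOfFin_image_univ {b : Fin m → α} (hb : StrictMono b) :
    ⇑((image b univ).orderEmbOfFin (card_image_univ_of_strictMono hb)) = b :=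
  (orderEmbOfFin_unique _ (fun k => mem_image_of_mem b (mem_univ k)) hb).symm

end Greedy

section KeyColumns

variable {n : ℕ}

theorem isLhd_iff {C A B : Finset (Fin n)} :
    isLhd n C A B ↔ ∃ b, IsGreedy C (A.orderEmbOfFin rfl) b ∧ B = image b univ := by
  have hthreshold : ∀ (k : Fin A.card) (x : Fin n),
      jthSmallestF n A k ≤ x + 1 ↔ A.orderEmbOfFin rfl k ≤ x := fun k x => by
    rw [jthSmallestF_eq_orderEmbOfFin A rfl, add_le_add_iff_right, Fin.val_fin_le]
  simp only [isLhd, hthreshold]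
  exact ⟨fun ⟨b, h₁, h₂, h₃, h₄, h₅⟩ => ⟨b, ⟨h₁, h₂, h₃, h₄⟩, h₅⟩,
    fun ⟨b, ⟨h₁, h₂, h₃, h₄⟩, h₅⟩ => ⟨b, h₁, h₂, h₃, h₄, h₅⟩⟩

theorem isLhd.subset {C A B : Finset (Fin n)} (h : isLhd n C A B) : B ⊆ C := by
  obtain ⟨b, hb, rfl⟩ := isLhd_iff.1 h
  simpa [image_subset_iff] using hb.mem

theorem isLhd.setLEF {C A B : Finset (Fin n)} (h : isLhd n C A B) : setLEF n A B := by
  obtain ⟨b, hb, rfl⟩ := isLhd_iff.1 h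
  rw [setLEF_iff rfl (card_image_univ_of_strictMono hb.strictMono),
    orderEmbOfFin_image_univ hb.strictMono]
  exact hb.le

theorem exists_isLhd {C A M : Finset (Fin n)} (hMC : M ⊆ C) (hAM : setLEF n A M) :
    ∃ B, isLhd n C A B ∧ setLEF n B M := by
  have hM : M.card = A.card := hAM.1.symm
  have hMS : ∀ k, M.orderEmbOfFin hM k ∈ C := fun k => hMC (orderEmbOfFin_mem M hM k)
  have hAM' := (setLEF_iff rfl hM).1 hAM
  obtain ⟨b, hb⟩ := exists_isGreedy (M.orderEmbOfFin hM).strictMono hMS hAM'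
  refine ⟨image b univ, isLhd_iff.2 ⟨b, hb, rfl⟩, ?_⟩
  rw [setLEF_iff (card_image_univ_of_strictMono hb.strictMono) hM,
    orderEmbOfFin_image_univ hb.strictMono]
  exact hb.le_of_strictMono (M.orderEmbOfFin hM).strictMono hMS hAM'

theorem isLhd_mono {C A A' B B' : Finset (Fin n)} (hA : A' ⊆ A) (hB : isLhd n C A B)
    (hB' : isLhd n C A' B') : B' ⊆ B := by
  obtain ⟨b, hb, rfl⟩ := isLhd_iff.1 hB
  obtain ⟨b', hb', rfl⟩ := isLhd_iff.1 hB'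
  have := hb.range_subset_range hb' (orderEmbOfFin A rfl).strictMono
    (orderEmbOfFin A' rfl).strictMono (by simpa using hA)
  rw [← coe_subset]
  simpa using this

theorem col_subset_col (α : Fin n → ℕ) {c d : ℕ} (h : c ≤ d) : col n α d ⊆ col n α c :=
  monotone_filter_right _ fun _ _ => h.trans

theorem suppC_eq_col_one (α : Fin n → ℕ) : suppC n α = col n α 1 := rfl

theorem col_eq_empty_of_sup_lt (α : Fin n → ℕ) {c : ℕ} (h : univ.sup α < c) :
    col n α c = ∅ :=
  filter_eq_empty_iff.2 fun i _ => not_le.2 ((le_sup (mem_univ i)).trans_lt h)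

theorem exists_col_eq_of_antitone (B : ℕ → Finset (Fin n)) (N : ℕ)
    (hanti : ∀ c d, 1 ≤ c → c ≤ d → B d ⊆ B c) (hN : ∀ c, N < c → B c = ∅) :
    ∃ ν : Fin n → ℕ, ∀ c, 1 ≤ c → col n ν c = B c := by
  classical
  refine ⟨fun i => Nat.findGreatest (fun c => i ∈ B c) N, fun c hc => ?_⟩
  ext i
  simp only [col, mem_filter, mem_univ, true_and]
  constructor
  · intro h
    exact hanti c _ hc h (Nat.findGreatest_of_ne_zero rfl (Nat.one_le_iff_ne_zero.1 (hc.trans h)))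
  · intro hi
    exact Nat.le_findGreatest (not_lt.1 fun h => by simp [hN c h] at hi) hi

end KeyColumns

/-- if `μ = m(α, S)` (the Bruhat-minimum of `{γ ≥ α : supp γ ⊆ S}`,
computed by the greedy algorithm), then for every column `c`, the entries of column `c`
of `key μ` are `S ◁ A_c`, where `A_c` is the set of entries of column `c` of `key α`. -/
theorem stmt13 (n : ℕ) (α : Fin n → ℕ) (S : Finset (Fin n)) (μ : Fin n → ℕ)
    (hμ : isBruhatMin n α S μ) :
    ∀ c : ℕ, 1 ≤ c → isLhd n S (col n α c) (col n μ c) := by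
  obtain ⟨hαμ, hμS, hmin⟩ := hμ
  have hcolS : ∀ c, 1 ≤ c → col n μ c ⊆ S := fun c hc =>
    (col_subset_col μ hc).trans (suppC_eq_col_one μ ▸ hμS)
  choose! B hB hBμ using fun c (hc : 1 ≤ c) => exists_isLhd (hcolS c hc) (hαμ c hc)
  obtain ⟨ν, hν⟩ := exists_col_eq_of_antitone B (univ.sup α)
    (fun c d hc hcd => isLhd_mono (col_subset_col α hcd) (hB c hc) (hB d (hc.trans hcd)))
    (fun c hc => card_eq_zero.1 <| by
      rw [← (hB c (by omega)).setLEF.1, col_eq_empty_of_sup_lt α hc, card_empty])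
  have hαν : bruhatLE n α ν := fun c hc => hν c hc ▸ (hB c hc).setLEF
  have hνS : suppC n ν ⊆ S := by
    rw [suppC_eq_col_one, hν 1 le_rfl]
    exact (hB 1 le_rfl).subset
  intro c hc
  have hμν := hmin ν hαν hνS c hc
  rw [hν c hc] at hμν
  rw [setLEF_antisymm hμν (hBμ c hc)]
  exact hB c hc
end
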